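/- Unity condition for the discrete delta function: for every grid spacing h > 0 and every point X ∈ ℝ³, the sum over all grid points x = h·v with v ∈ ℤ³ of δ̂(x − X, h)·h³ equals 1. -/

import Mathlib

/-! The one-dimensional kernel is a partition of unity: writing `r = m + t` with `m = ⌊r⌋` and
`t ∈ [0, 1)`, the only integers `n` with `φ(n - r) ≠ 0` are `m - 1, …, m + 2`, all four square
roots in their values equal `s = √(1 + 4t - 4t²)`, and the four values
`(3 - 2t - s)/8, (3 - 2t + s)/8, (1 + 2t + s)/8, (1 + 2t - s)/8` add up to `1`.
After the substitution `x = h v`, `δ̂(x - X, h) h³` is the product of three such one-dimensional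
kernels, so the sum over `ℤ³` is the product of three sums equal to `1`. -/

/-- The Peskin four-point kernel. -/
noncomputable def peskinPhi (r : ℝ) : ℝ :=
  if |r| ≤ 1 then (3 - 2 * |r| + Real.sqrt (1 + 4 * |r| - 4 * |r| ^ 2)) / 8
  else if |r| ≤ 2 then (5 - 2 * |r| - Real.sqrt (-7 + 12 * |r| - 4 * |r| ^ 2)) / 8
  else 0

/-- The smoothed Dirac delta function `δ̂(x, ω) = ω⁻³ φ(x₁/ω) φ(x₂/ω) φ(x₃/ω)`. -/
noncomputable def deltaHat (x : Fin 3 → ℝ) (ω : ℝ) : ℝ :=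
  ω⁻¹ ^ 3 * (peskinPhi (x 0 / ω) * peskinPhi (x 1 / ω) * peskinPhi (x 2 / ω))

open Finset

lemma peskinPhi_neg (r : ℝ) : peskinPhi (-r) = peskinPhi r := by
  rw [peskinPhi, peskinPhi, abs_neg]

lemma peskinPhi_eq_zero_of_two_le_abs {r : ℝ} (hr : 2 ≤ |r|) : peskinPhi r = 0 := by
  rw [peskinPhi, if_neg (by linarith)]
  split_ifs with h2
  · rw [le_antisymm h2 hr]; norm_num
  · rfl

lemma peskinPhi_of_nonneg_of_le_one {t : ℝ} (h0 : 0 ≤ t) (h1 : t ≤ 1) :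
    peskinPhi t = (3 - 2 * t + √(1 + 4 * t - 4 * t ^ 2)) / 8 := by
  rw [peskinPhi, abs_of_nonneg h0, if_pos h1]

lemma peskinPhi_one_add {t : ℝ} (h0 : 0 ≤ t) (h1 : t ≤ 1) :
    peskinPhi (1 + t) = (3 - 2 * t - √(1 + 4 * t - 4 * t ^ 2)) / 8 := by
  rw [peskinPhi, abs_of_nonneg (by linarith)]
  split_ifs with hle hle₂
  · obtain rfl : t = 0 := by linarith
    norm_num
  · rw [show -7 + 12 * (1 + t) - 4 * (1 + t) ^ 2 = 1 + 4 * t - 4 * t ^ 2 by ring]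
    ring
  · exact absurd (by linarith) hle₂

lemma peskinPhi_int_sub_eq_zero (r : ℝ) {n : ℤ} (hn : n ∉ Icc (⌊r⌋ - 1) (⌊r⌋ + 2)) :
    peskinPhi (n - r) = 0 := by
  have hlo := Int.floor_le r
  have hhi := Int.lt_floor_add_one r
  apply peskinPhi_eq_zero_of_two_le_abs
  rw [mem_Icc, not_and_or, not_le, not_le] at hn
  rcases hn with hn | hn
  · have : (n : ℝ) ≤ ⌊r⌋ - 2 := by exact_mod_cast (by omega : n ≤ ⌊r⌋ - 2)
    exact le_abs.mpr (Or.inr (by linarith))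
  · have : (⌊r⌋ : ℝ) + 3 ≤ n := by exact_mod_cast (by omega : ⌊r⌋ + 3 ≤ n)
    exact le_abs.mpr (Or.inl (by linarith))

lemma sum_peskinPhi_int_sub (r : ℝ) :
    ∑ n ∈ Icc (⌊r⌋ - 1) (⌊r⌋ + 2), peskinPhi (n - r) = 1 := by
  set m := ⌊r⌋
  set t := Int.fract r
  have ht0 : 0 ≤ t := Int.fract_nonneg r
  have ht1 : t < 1 := Int.fract_lt_one r
  have hr : r = m + t := (Int.floor_add_fract r).symm
  set s := √(1 + 4 * t - 4 * t ^ 2)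
  have hIcc : Icc (m - 1) (m + 2) = {m - 1, m, m + 1, m + 2} := by
    ext n; simp only [mem_Icc, mem_insert, mem_singleton]; omega
  have hs : √(1 + 4 * (1 - t) - 4 * (1 - t) ^ 2) = s := by congr 1; ring
  have e₁ : peskinPhi ((m - 1 : ℤ) - r) = (3 - 2 * t - s) / 8 := by
    rw [show ((m - 1 : ℤ) : ℝ) - r = -(1 + t) by push_cast [hr]; ring, peskinPhi_neg,
      peskinPhi_one_add ht0 ht1.le]
  have e₂ : peskinPhi (m - r) = (3 - 2 * t + s) / 8 := by
    rw [show (m : ℝ) - r = -t by rw [hr]; ring, peskinPhi_neg,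
      peskinPhi_of_nonneg_of_le_one ht0 ht1.le]
  have e₃ : peskinPhi ((m + 1 : ℤ) - r) = (1 + 2 * t + s) / 8 := by
    rw [show ((m + 1 : ℤ) : ℝ) - r = 1 - t by push_cast [hr]; ring,
      peskinPhi_of_nonneg_of_le_one (by linarith) (by linarith), hs]
    ring
  have e₄ : peskinPhi ((m + 2 : ℤ) - r) = (1 + 2 * t - s) / 8 := by
    rw [show ((m + 2 : ℤ) : ℝ) - r = 1 + (1 - t) by push_cast [hr]; ring,
      peskinPhi_one_add (by linarith) (by linarith), hs]
    ring
  rw [hIcc, sum_insert (by simp only [mem_insert, mem_singleton]; omega),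
    sum_insert (by simp only [mem_insert, mem_singleton]; omega),
    sum_insert (by simp only [mem_singleton]; omega), sum_singleton, e₁, e₂, e₃, e₄]
  ring

lemma tsum_prod_eq_prod_sum {ι κ R : Type*} [Fintype ι] [DecidableEq ι] [CommSemiring R]
    [TopologicalSpace R] (f : ι → κ → R) (s : ι → Finset κ) (hf : ∀ i, ∀ k ∉ s i, f i k = 0) :
    ∑' v : ι → κ, ∏ i, f i (v i) = ∏ i, ∑ k ∈ s i, f i k := by
  rw [prod_univ_sum, tsum_eq_sum]
  intro v hv
  obtain ⟨i, hi⟩ := not_forall.mp (Fintype.mem_piFinset.not.mp hv)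
  exact prod_eq_zero (mem_univ i) (hf i _ hi)

lemma deltaHat_grid_sub_mul_pow_three {h : ℝ} (hh : h ≠ 0) (v : Fin 3 → ℤ) (X : Fin 3 → ℝ) :
    deltaHat (fun i => h * v i - X i) h * h ^ 3 = ∏ i, peskinPhi (v i - X i / h) := by
  have harg : ∀ i, (h * v i - X i) / h = v i - X i / h := fun i => by field_simp
  rw [deltaHat, Fin.prod_univ_three, harg, harg, harg]
  field_simp

/-- Unity condition for the discrete delta function: for every grid spacing `h > 0` and
every point `X ∈ ℝ³`, the sum over all grid points `x = h·v`, `v ∈ ℤ³`, of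
`δ̂(x − X, h)·h³` equals `1`. -/
theorem deltaHat_unity (h : ℝ) (hh : 0 < h) (X : Fin 3 → ℝ) :
    ∑' v : Fin 3 → ℤ, deltaHat (fun i => h * (v i : ℝ) - X i) h * h ^ 3 = 1 := by
  simp_rw [deltaHat_grid_sub_mul_pow_three hh.ne']
  rw [tsum_prod_eq_prod_sum (fun i (n : ℤ) => peskinPhi (n - X i / h))
    (fun i => Icc (⌊X i / h⌋ - 1) (⌊X i / h⌋ + 2)) fun i _ => peskinPhi_int_sub_eq_zero _]
  simp only [sum_peskinPhi_int_sub, prod_const_one]
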